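/- Let G be a nilpotent group of class at most n+1 that is not (n+1)-abelian in the Engel sense: there exist x, g ∈ G with [x, g, g, …, g] (g repeated n times) ≠ 1. Then the map e' : Gⁿ → G defined by e'(g₁,…,g_n) = [x, g₁,…,g_n] is multilinear and non-degenerate, i.e., e'(g₁^{a₁},…,g_n^{a_n}) = e'(g₁,…,g_n)^{a₁⋯a_n} for all integers aᵢ, and e'(g,…,g) ≠ 1 for some g ∈ G. -/

import Mathlib

/-- The commutator `[a,b] = a⁻¹b⁻¹ab`. -/
def gcomm {G : Type*} [Group G] (a b : G) : G := a⁻¹ * b⁻¹ * a * b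

/-- Conjugation `g^h = h⁻¹gh`. -/
def gconj {G : Type*} [Group G] (g h : G) : G := h⁻¹ * g * h

/-- Left-normed commutator `[x, l₁, l₂, …]`. -/
def commList {G : Type*} [Group G] (x : G) (l : List G) : G := l.foldl gcomm x

/-- Left-normed commutator of a list: `[g₁, …, g_k]` (equal to `1` for the empty list). -/
def listComm {G : Type*} [Group G] : List G → G
  | [] => 1
  | x :: xs => commList x xs

/-!
Mathlib's `lowerCentralSeries k` is the paper's `γ_{k+1}`, so the hypothesis says that commutators
of weight `n + 2` vanish; in particular `[y, h₁, …, h_m] = 1` whenever `y ∈ γ_{k+1}` and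
`k + m > n`. Expanding `[ab, g]` and `[y, bc]` by the usual commutator identities, every error
term has higher weight than the main terms and is killed by the entries still to come. Hence each
slot of `[x, g₁, …, g_n]` is a homomorphism `G → G`, and integer exponents factor out
slot by slot.
-/

open Subgroup

section LowerCentralSeries

variable {G : Type*} [Group G]

lemma gcomm_mem_lowerCentralSeries_succ {i : ℕ} {a : G}
    (ha : a ∈ (⊤ : Subgroup G).lowerCentralSeries i) (b : G) :
    gcomm a b ∈ (⊤ : Subgroup G).lowerCentralSeries (i + 1) :=
  subset_closure ⟨a⁻¹, inv_mem ha, b⁻¹, mem_top _, by simp [gcomm, commutatorElement_def]⟩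

lemma gcomm_mem_lowerCentralSeries_succ' (a : G) {j : ℕ} {b : G}
    (hb : b ∈ (⊤ : Subgroup G).lowerCentralSeries j) :
    gcomm a b ∈ (⊤ : Subgroup G).lowerCentralSeries (j + 1) := by
  have : gcomm a b = (gcomm b a)⁻¹ := by simp only [gcomm]; group
  exact this ▸ inv_mem (gcomm_mem_lowerCentralSeries_succ hb a)

lemma commList_cons (a g : G) (l : List G) :
    commList a (g :: l) = commList (gcomm a g) l := rfl

lemma commList_mem_lowerCentralSeries {k : ℕ} {y : G}
    (hy : y ∈ (⊤ : Subgroup G).lowerCentralSeries k) (l : List G) :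
    commList y l ∈ (⊤ : Subgroup G).lowerCentralSeries (k + l.length) := by
  induction l generalizing k y with
  | nil => exact hy
  | cons g l ih =>
    rw [commList_cons, List.length_cons, ← add_assoc, add_right_comm]
    exact ih (gcomm_mem_lowerCentralSeries_succ hy g)

end LowerCentralSeries

section ClassAtMost

variable {G : Type*} [Group G] {n : ℕ} (h : (⊤ : Subgroup G).lowerCentralSeries (n + 1) = ⊥)
include h

lemma commList_eq_one {k : ℕ} {y : G} (hy : y ∈ (⊤ : Subgroup G).lowerCentralSeries k)
    {l : List G} (hl : n + 1 ≤ k + l.length) :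
    commList y l = 1 := by
  have := Subgroup.lowerCentralSeries_antitone ⊤ hl (commList_mem_lowerCentralSeries hy l)
  rwa [h, mem_bot] at this

lemma commList_mul {i : ℕ} {a : G}
    (ha : a ∈ (⊤ : Subgroup G).lowerCentralSeries i) (b : G) {l : List G}
    (hl : n ≤ i + l.length) :
    commList (a * b) l = commList a l * commList b l := by
  induction l generalizing i a b with
  | nil => rfl
  | cons g l ih =>
    simp only [List.length_cons] at hl
    have hag := gcomm_mem_lowerCentralSeries_succ ha g
    have hw := gcomm_mem_lowerCentralSeries_succ' b (inv_mem hag)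
    have key : gcomm (a * b) g = gcomm b (gcomm a g)⁻¹ * (gcomm a g * gcomm b g) := by
      simp only [gcomm]; group
    rw [commList_cons, commList_cons, commList_cons, key,
      ih hw _ (by omega), commList_eq_one h hw (by omega), one_mul, ih hag _ (by omega)]

lemma commList_cons_mul {k : ℕ} {y : G} (hy : y ∈ (⊤ : Subgroup G).lowerCentralSeries k)
    (b c : G) {l : List G} (hl : n ≤ k + 1 + l.length) :
    commList y (b * c :: l) = commList y (b :: l) * commList y (c :: l) := by
  have hb := gcomm_mem_lowerCentralSeries_succ hy b
  have hc := gcomm_mem_lowerCentralSeries_succ hy c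
  have hw : gcomm (gcomm y c) (gcomm y b) * gcomm (gcomm y b) c ∈
      (⊤ : Subgroup G).lowerCentralSeries (k + 1 + 1) :=
    mul_mem (gcomm_mem_lowerCentralSeries_succ hc _) (gcomm_mem_lowerCentralSeries_succ hb c)
  have key : gcomm y (b * c) =
      gcomm y b * (gcomm y c * (gcomm (gcomm y c) (gcomm y b) * gcomm (gcomm y b) c)) := by
    simp only [gcomm]; group
  rw [commList_cons, commList_cons, commList_cons, key, commList_mul h hb _ hl,
    commList_mul h hc _ hl, commList_eq_one h hw (by omega), mul_one]

lemma commList_cons_zpow {k : ℕ} {y : G}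
    (hy : y ∈ (⊤ : Subgroup G).lowerCentralSeries k) (b : G) (a : ℤ)
    {l : List G} (hl : n ≤ k + 1 + l.length) :
    commList y (b ^ a :: l) = commList y (b :: l) ^ a :=
  map_zpow (MonoidHom.mk' (fun c => commList y (c :: l))
    (fun b c => commList_cons_mul h hy b c hl)) b a

lemma commList_ofFn_zpow {m k : ℕ} {y : G} (hy : y ∈ (⊤ : Subgroup G).lowerCentralSeries k)
    (hm : n ≤ k + m) (g : Fin m → G) (a : Fin m → ℤ) :
    commList y (List.ofFn fun i => g i ^ a i) = commList y (List.ofFn g) ^ ∏ i, a i := by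
  induction m generalizing k y with
  | zero => simp [commList]
  | succ m ih =>
    rw [List.ofFn_succ, List.ofFn_succ, commList_cons_zpow h hy _ _ (by simp; omega),
      commList_cons, commList_cons,
      ih (gcomm_mem_lowerCentralSeries_succ hy (g 0)) (by omega) (fun i => g i.succ),
      ← zpow_mul, Fin.prod_univ_succ, mul_comm (a 0)]

end ClassAtMost

theorem stmt12 {G : Type*} [Group G] (n : ℕ)
    (h : (⊤ : Subgroup G).lowerCentralSeries (n + 1) = ⊥)
    (x g₀ : G) (hx : commList x (List.replicate n g₀) ≠ 1) :
    (∀ (g : Fin n → G) (a : Fin n → ℤ),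
        commList x (List.ofFn (fun i => g i ^ a i))
          = (commList x (List.ofFn g)) ^ (∏ i, a i)) ∧
      ∃ g : G, commList x (List.replicate n g) ≠ 1 :=
  ⟨commList_ofFn_zpow h (k := 0) (mem_top x) (by omega), g₀, hx⟩
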